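/- arXiv:2011.10454 — 5 statements merged into one kernel-verified Lean document; each statement's English description precedes it below -/
import Mathlib

section
/- Let x ∈ (0,1)^N and set U = 1/(Σ_{i=1}^N x_i). Then −U² · Σ_{i=1}^N (β b_i(x)(1 − x_i) − δ x_i) ≤ β λ1 + (δ − β d_min)·U. -/
/-!
With `S = ∑ xᵢ = 1/U`, the left side is `β U² (xᵀAx - ∑ᵢ bᵢ(x)) + δ U`. By symmetry
`∑ᵢ bᵢ(x) = ∑ⱼ deg(j) xⱼ ≥ d_min S`, and the Rayleigh bound gives
`xᵀAx ≤ λ₁ ‖x‖² ≤ λ₁ S²`, where `λ₁ ≥ 0` because `A` is entrywise nonnegative.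
-/

open Matrix

namespace Matrix

variable {n : Type*} [Fintype n] {A : Matrix n n ℝ}

lemma mulVec_nonneg_of_nonneg (hA : ∀ i j, 0 ≤ A i j) {x : n → ℝ} (hx : 0 ≤ x) :
    0 ≤ A *ᵥ x :=
  fun i ↦ Finset.sum_nonneg fun j _ ↦ mul_nonneg (hA i j) (hx j)

lemma IsSymm.mul_sum_le_sum_mulVec (hA : A.IsSymm) {d : ℝ} (hd : ∀ i, d ≤ ∑ j, A i j)
    {x : n → ℝ} (hx : 0 ≤ x) : d * ∑ i, x i ≤ ∑ i, (A *ᵥ x) i := by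
  have hcol : ∑ i, (A *ᵥ x) i = ∑ j, (∑ i, A j i) * x j := by
    simp only [mulVec, dotProduct, Finset.sum_mul]
    rw [Finset.sum_comm]
    exact Finset.sum_congr rfl fun j _ ↦ Finset.sum_congr rfl fun i _ ↦ by rw [hA.apply j i]
  rw [hcol, Finset.mul_sum]
  exact Finset.sum_le_sum fun j _ ↦ mul_le_mul_of_nonneg_right (hd j) (hx j)

variable [DecidableEq n]

theorem IsSymm.dotProduct_mulVec_le_of_eigenvalue_le (hA : A.IsSymm) {c : ℝ}
    (hc : ∀ (μ : ℝ) (v : n → ℝ), v ≠ 0 → A *ᵥ v = μ • v → μ ≤ c) (y : n → ℝ) :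
    y ⬝ᵥ A *ᵥ y ≤ c * (y ⬝ᵥ y) := by
  have hH : A.IsHermitian := hA
  -- `σ(c - A) = c - σ(A)` and every point of `σ(A)` is an eigenvalue, so `c - A ≥ 0`.
  have hpsd : (algebraMap ℝ _ c - A).PosSemidef := by
    refine posSemidef_iff_isHermitian_and_spectrum_nonneg.mpr ⟨?_, ?_⟩
    · exact isHermitian_iff_isSymm.mpr (by simp [IsSymm, hA.eq, algebraMap_eq_diagonal])
    · rw [← spectrum.singleton_sub_eq, hH.spectrum_real_eq_range_eigenvalues]
      rintro _ ⟨_, rfl, _, ⟨i, rfl⟩, rfl⟩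
      have := hc _ _ (fun h ↦ hH.eigenvectorBasis.orthonormal.ne_zero i
        (WithLp.ofLp_injective 2 h)) (hH.mulVec_eigenvectorBasis i)
      simpa using this
  have := hpsd.dotProduct_mulVec_nonneg y
  simpa only [star_trivial, Algebra.algebraMap_eq_smul_one, sub_mulVec, smul_mulVec, one_mulVec,
    dotProduct_sub, dotProduct_smul, smul_eq_mul, sub_nonneg] using this

lemma IsSymm.nonneg_of_eigenvalue_le [Nonempty n] (hA : A.IsSymm) (hA₀ : ∀ i j, 0 ≤ A i j)
    {c : ℝ} (hc : ∀ (μ : ℝ) (v : n → ℝ), v ≠ 0 → A *ᵥ v = μ • v → μ ≤ c) : 0 ≤ c := by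
  have hones := hA.dotProduct_mulVec_le_of_eigenvalue_le hc 1
  rw [one_dotProduct_one] at hones
  have hform : 0 ≤ 1 ⬝ᵥ A *ᵥ 1 :=
    dotProduct_nonneg_of_nonneg zero_le_one (mulVec_nonneg_of_nonneg hA₀ zero_le_one)
  exact nonneg_of_mul_nonneg_left (hform.trans hones) (by exact_mod_cast Fintype.card_pos)

lemma IsSymm.dotProduct_mulVec_le_mul_sq_sum [Nonempty n] (hA : A.IsSymm)
    (hA₀ : ∀ i j, 0 ≤ A i j) {c : ℝ}
    (hc : ∀ (μ : ℝ) (v : n → ℝ), v ≠ 0 → A *ᵥ v = μ • v → μ ≤ c) {x : n → ℝ} (hx : 0 ≤ x) :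
    x ⬝ᵥ A *ᵥ x ≤ c * (∑ i, x i) ^ 2 := by
  have hsq : x ⬝ᵥ x ≤ (∑ i, x i) ^ 2 := by
    simpa [dotProduct, sq] using Finset.sum_sq_le_sq_sum_of_nonneg fun i _ ↦ hx i
  exact (hA.dotProduct_mulVec_le_of_eigenvalue_le hc x).trans
    (mul_le_mul_of_nonneg_left hsq (hA.nonneg_of_eigenvalue_le hA₀ hc))

end Matrix

theorem drift_U_estimate_general
    (N : ℕ) (hN : 1 ≤ N)
    (A : Matrix (Fin N) (Fin N) ℝ)
    (hA_symm : A.IsSymm)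
    (hA_01 : ∀ i j, A i j = 0 ∨ A i j = 1)
    (lam1 : ℝ)
    (hlam1_max : ∀ (μ : ℝ) (v : Fin N → ℝ), v ≠ 0 → A.mulVec v = μ • v → μ ≤ lam1)
    (dmin : ℝ)
    (hdmin_le : ∀ i, dmin ≤ ∑ j, A i j)
    (β δ : ℝ) (hβ : 0 ≤ β)
    (x : Fin N → ℝ) (hx : ∀ i, x i ∈ Set.Ioo (0 : ℝ) 1)
    (U : ℝ) (hU : U = 1 / ∑ i, x i) :
    -U ^ 2 * ∑ i, (β * (∑ j, A i j * x j) * (1 - x i) - δ * x i)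
      ≤ β * lam1 + (δ - β * dmin) * U := by
  have : Nonempty (Fin N) := Fin.pos_iff_nonempty.mp hN
  have hA₀ : ∀ i j, 0 ≤ A i j := fun i j ↦ by rcases hA_01 i j with h | h <;> simp [h]
  have hx₀ : 0 ≤ x := fun i ↦ (hx i).1.le
  have hS : 0 < ∑ i, x i := Finset.sum_pos (fun i _ ↦ (hx i).1) Finset.univ_nonempty
  have hdeg := sub_nonneg.mpr (hA_symm.mul_sum_le_sum_mulVec hdmin_le hx₀)
  have hquad := sub_nonneg.mpr (hA_symm.dotProduct_mulVec_le_mul_sq_sum hA₀ hlam1_max hx₀)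
  have hsum : ∑ i, (β * (∑ j, A i j * x j) * (1 - x i) - δ * x i)
      = β * ∑ i, (A *ᵥ x) i - β * (x ⬝ᵥ A *ᵥ x) - δ * ∑ i, x i := by
    rw [dotProduct, Finset.mul_sum, Finset.mul_sum, Finset.mul_sum, ← Finset.sum_sub_distrib,
      ← Finset.sum_sub_distrib]
    exact Finset.sum_congr rfl fun i _ ↦ by simp only [mulVec, dotProduct]; ring
  have hgap : β * lam1 + (δ - β * dmin) * U - -U ^ 2 * (β * ∑ i, (A *ᵥ x) i
        - β * (x ⬝ᵥ A *ᵥ x) - δ * ∑ i, x i)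
      = (β * (∑ i, (A *ᵥ x) i - dmin * ∑ i, x i)
        + β * (lam1 * (∑ i, x i) ^ 2 - x ⬝ᵥ A *ᵥ x)) / (∑ i, x i) ^ 2 := by
    rw [hU]
    field_simp
    ring
  rw [hsum, ← sub_nonneg, hgap]
  exact div_nonneg (add_nonneg (mul_nonneg hβ hdeg) (mul_nonneg hβ hquad)) (sq_nonneg _)

/-- Drift estimate (fibound2) in the stochastic-permanence lemma: for `x ∈ (0,1)^N` and
`U = 1/∑ᵢ xᵢ`, `-U² ∑ i (β b_i(x)(1-x_i) - δ x_i) ≤ β λ₁ + (δ - β d_min) U`. -/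
theorem drift_U_estimate
    (N : ℕ) (hN : 1 ≤ N)
    (A : Matrix (Fin N) (Fin N) ℝ)
    (hA_symm : A.IsSymm)
    (hA_01 : ∀ i j, A i j = 0 ∨ A i j = 1)
    (hA_diag : ∀ i, A i i = 0)
    (lam1 : ℝ)
    (hlam1_eig : ∃ v : Fin N → ℝ, v ≠ 0 ∧ A.mulVec v = lam1 • v)
    (hlam1_max : ∀ (μ : ℝ) (v : Fin N → ℝ), v ≠ 0 → A.mulVec v = μ • v → μ ≤ lam1)
    (dmin : ℝ)
    (hdmin_le : ∀ i, dmin ≤ ∑ j, A i j)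
    (hdmin_mem : ∃ i, dmin = ∑ j, A i j)
    (β δ : ℝ) (hβ : 0 ≤ β) (hδ : 0 ≤ δ)
    (x : Fin N → ℝ) (hx : ∀ i, x i ∈ Set.Ioo (0 : ℝ) 1)
    (U : ℝ) (hU : U = 1 / ∑ i, x i) :
    -U ^ 2 * ∑ i, (β * (∑ j, A i j * x j) * (1 - x i) - δ * x i)
      ≤ β * lam1 + (δ - β * dmin) * U :=
  drift_U_estimate_general N hN A hA_symm hA_01 lam1 hlam1_max dmin hdmin_le β δ hβ x hx U hU
end

section
/- Suppose Σ_{s=1}^m π_s ᾱ(s) > 0. Then there exist θ ∈ (0,1) and a vector z ∈ ℝ^m with z_s > 0 for every s such that for every s ∈ {1,…,m}: (θ ᾱ(s) − θ² K(s))·z_s − Σ_{r=1}^m q_{sr} z_r > 0. (Equivalently, the matrix T(θ) = diag(θᾱ(1) − θ²K(1), …, θᾱ(m) − θ²K(m)) − Q is a nonsingular M-matrix.) -/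
/-- Lemma 3.2: if `∑ s π_s ᾱ(s) > 0`, then there exist `θ ∈ (0,1)` and a vector `z ≫ 0`
such that `(θ ᾱ(s) - θ² K(s)) z_s - ∑ r q_{sr} z_r > 0` for every `s`; equivalently
`T(θ) = diag(θᾱ - θ²K) - Q` is a nonsingular M-matrix. -/
theorem M_matrix_lemma
    (m : ℕ) (hm : 1 ≤ m)
    (Q : Matrix (Fin m) (Fin m) ℝ)
    (hQ_off : ∀ s r, s ≠ r → 0 ≤ Q s r)
    (hQ_row : ∀ s, ∑ r, Q s r = 0)
    (π : Fin m → ℝ)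
    (hπ_pos : ∀ s, 0 < π s)
    (hπ_sum : ∑ s, π s = 1)
    (hπ_stat : ∀ r, ∑ s, π s * Q s r = 0)
    (hQ_ass1 : ∃ s₀, ∀ r, r ≠ s₀ → 0 < Q r s₀)
    (alphabar : Fin m → ℝ)
    (K : Fin m → ℝ) (hK : ∀ s, 0 ≤ K s)
    (hpos : 0 < ∑ s, π s * alphabar s) :
    ∃ θ ∈ Set.Ioo (0 : ℝ) 1, ∃ z : Fin m → ℝ,
      (∀ s, 0 < z s) ∧
      ∀ s, 0 < (θ * alphabar s - θ ^ 2 * K s) * z s - ∑ r, Q s r * z r := by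
  classical
  obtain ⟨s₀, hs₀⟩ := hQ_ass1
  have hm0 : 0 < m := hm
  haveI : Nonempty (Fin m) := ⟨⟨0, hm0⟩⟩
  set δ := ∑ s, π s * alphabar s with hδ
  -- Step A: kernel of Q consists of constant vectors
  have hker : ∀ x : Fin m → ℝ, (∀ s, ∑ r, Q s r * x r = 0) → ∀ s, x s = x s₀ := by
    intro x hx
    have keymax : ∀ s, (∀ r, x r ≤ x s) → x s₀ = x s := by
      intro s hmax
      by_cases h : s = s₀
      · rw [h]
      · have h0 : ∑ r, Q s r * (x r - x s) = 0 := by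
          have : ∑ r, Q s r * (x r - x s)
              = (∑ r, Q s r * x r) - (∑ r, Q s r) * x s := by
            rw [Finset.sum_mul, ← Finset.sum_sub_distrib]
            exact Finset.sum_congr rfl fun r _ => by ring
          rw [this, hx s, hQ_row s]; ring
        have hnp : ∀ r ∈ Finset.univ, Q s r * (x r - x s) ≤ 0 := by
          intro r _
          by_cases hr : r = s
          · subst hr; simp
          · exact mul_nonpos_of_nonneg_of_nonpos (hQ_off s r (Ne.symm hr))
              (by linarith [hmax r])
        have hall := (Finset.sum_eq_zero_iff_of_nonpos hnp).mp h0 s₀ (Finset.mem_univ _)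
        have hq : 0 < Q s s₀ := hs₀ s h
        have : x s₀ - x s = 0 := by
          rcases mul_eq_zero.mp hall with h' | h'
          · exact absurd h' (ne_of_gt hq)
          · exact h'
        linarith
    have keymin : ∀ s, (∀ r, x s ≤ x r) → x s₀ = x s := by
      intro s hmin
      by_cases h : s = s₀
      · rw [h]
      · have h0 : ∑ r, Q s r * (x r - x s) = 0 := by
          have : ∑ r, Q s r * (x r - x s)
              = (∑ r, Q s r * x r) - (∑ r, Q s r) * x s := by
            rw [Finset.sum_mul, ← Finset.sum_sub_distrib]
            exact Finset.sum_congr rfl fun r _ => by ring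
          rw [this, hx s, hQ_row s]; ring
        have hnn : ∀ r ∈ Finset.univ, 0 ≤ Q s r * (x r - x s) := by
          intro r _
          by_cases hr : r = s
          · subst hr; simp
          · exact mul_nonneg (hQ_off s r (Ne.symm hr)) (by linarith [hmin r])
        have hall := (Finset.sum_eq_zero_iff_of_nonneg hnn).mp h0 s₀ (Finset.mem_univ _)
        have hq : 0 < Q s s₀ := hs₀ s h
        have : x s₀ - x s = 0 := by
          rcases mul_eq_zero.mp hall with h' | h'
          · exact absurd h' (ne_of_gt hq)
          · exact h'
        linarith
    obtain ⟨smax, -, hsmax⟩ := Finset.exists_max_image Finset.univ x ⟨s₀, Finset.mem_univ _⟩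
    obtain ⟨smin, -, hsmin⟩ := Finset.exists_min_image Finset.univ x ⟨s₀, Finset.mem_univ _⟩
    have hmx := keymax smax (fun r => hsmax r (Finset.mem_univ _))
    have hmn := keymin smin (fun r => hsmin r (Finset.mem_univ _))
    intro s
    have h1 := hsmax s (Finset.mem_univ _)
    have h2 := hsmin s (Finset.mem_univ _)
    linarith
  -- the stationary identity in swapped form
  have hswap : ∀ x : Fin m → ℝ, ∑ s, π s * (∑ r, Q s r * x r) = 0 := by
    intro x
    have h1 : ∑ s, π s * (∑ r, Q s r * x r)
        = ∑ r, (∑ s, π s * Q s r) * x r := by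
      simp_rw [Finset.mul_sum, Finset.sum_mul]
      rw [Finset.sum_comm]
      exact Finset.sum_congr rfl fun r _ => Finset.sum_congr rfl fun s _ => by ring
    rw [h1]
    simp [hπ_stat]
  -- Step B: the matrix M = 1πᵀ - Q is invertible; solve Poisson equation
  set M : Matrix (Fin m) (Fin m) ℝ := fun s r => π r - Q s r with hM
  have hMapp : ∀ (x : Fin m → ℝ) (s : Fin m),
      M.mulVec x s = (∑ r, π r * x r) - ∑ r, Q s r * x r := by
    intro x s
    simp only [Matrix.mulVec, dotProduct, hM]
    rw [← Finset.sum_sub_distrib]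
    exact Finset.sum_congr rfl fun r _ => by ring
  have hinj : Function.Injective M.mulVecLin := by
    rw [injective_iff_map_eq_zero]
    intro x hx
    have hx' : ∀ s, M.mulVec x s = 0 := fun s => congrFun hx s
    have hpx : ∑ r, π r * x r = 0 := by
      have h1 : ∑ s, π s * M.mulVec x s = 0 := by
        simp [hx']
      have h2 : ∑ s, π s * M.mulVec x s
          = (∑ s, π s) * (∑ r, π r * x r) - ∑ s, π s * (∑ r, Q s r * x r) := by
        rw [Finset.sum_mul, ← Finset.sum_sub_distrib]
        exact Finset.sum_congr rfl fun s _ => by rw [hMapp]; ring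
      rw [h2, hswap x, hπ_sum] at h1
      linarith
    have hQx : ∀ s, ∑ r, Q s r * x r = 0 := by
      intro s
      have := hMapp x s
      rw [hx' s, hpx] at this
      linarith
    have hconst := hker x hQx
    have : ∑ r, π r * x r = x s₀ := by
      calc ∑ r, π r * x r = ∑ r, π r * x s₀ :=
            Finset.sum_congr rfl fun r _ => by rw [hconst r]
        _ = (∑ r, π r) * x s₀ := by rw [Finset.sum_mul]
        _ = x s₀ := by rw [hπ_sum, one_mul]
    have hx0 : x s₀ = 0 := by rw [← this, hpx]
    funext s
    rw [hconst s, hx0]; rfl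
  have hsurj : Function.Surjective M.mulVecLin :=
    (LinearMap.injective_iff_surjective).mp hinj
  obtain ⟨c, hc0⟩ := hsurj (fun s => δ - alphabar s)
  have hc0' : ∀ s, M.mulVec c s = δ - alphabar s := fun s => congrFun hc0 s
  -- π · c = 0
  have hπc : ∑ r, π r * c r = 0 := by
    have h1 : ∑ s, π s * M.mulVec c s = ∑ s, π s * (δ - alphabar s) := by
      exact Finset.sum_congr rfl fun s _ => by rw [hc0' s]
    have h2 : ∑ s, π s * M.mulVec c s
        = (∑ s, π s) * (∑ r, π r * c r) - ∑ s, π s * (∑ r, Q s r * c r) := by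
      rw [Finset.sum_mul, ← Finset.sum_sub_distrib]
      exact Finset.sum_congr rfl fun s _ => by rw [hMapp]; ring
    have h3 : ∑ s, π s * (δ - alphabar s) = 0 := by
      have : ∑ s, π s * (δ - alphabar s)
          = (∑ s, π s) * δ - ∑ s, π s * alphabar s := by
        rw [Finset.sum_mul, ← Finset.sum_sub_distrib]
        exact Finset.sum_congr rfl fun s _ => by ring
      rw [this, hπ_sum, ← hδ]; ring
    rw [h2, hswap c, hπ_sum] at h1
    rw [h3] at h1
    linarith
  -- Poisson equation
  have hc : ∀ s, ∑ r, Q s r * c r = alphabar s - δ := by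
    intro s
    have := hMapp c s
    rw [hc0' s, hπc] at this
    linarith
  -- Step C: choose θ
  set D : Fin m → ℝ := fun s => |c s| + |alphabar s * c s - K s| + |K s * c s| with hD
  set B : ℝ := Finset.univ.sup' ⟨s₀, Finset.mem_univ _⟩ D with hB
  have hBD : ∀ s, D s ≤ B := fun s => Finset.le_sup' D (Finset.mem_univ s)
  have hB0 : 0 ≤ B := le_trans (by positivity) (hBD s₀)
  set θ : ℝ := min (δ / (2 * (B + 1))) (1 / (2 * (B + 1))) with hθ
  have hθpos : 0 < θ := lt_min (by positivity) (by positivity)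
  have hθB : θ * (2 * (B + 1)) ≤ δ := by
    have := min_le_left (δ / (2 * (B + 1))) (1 / (2 * (B + 1)))
    rw [← hθ] at this
    calc θ * (2 * (B + 1)) ≤ (δ / (2 * (B + 1))) * (2 * (B + 1)) := by
          apply mul_le_mul_of_nonneg_right this (by positivity)
      _ = δ := by field_simp
  have hθB1 : θ * (2 * (B + 1)) ≤ 1 := by
    have := min_le_right (δ / (2 * (B + 1))) (1 / (2 * (B + 1)))
    rw [← hθ] at this
    calc θ * (2 * (B + 1)) ≤ (1 / (2 * (B + 1))) * (2 * (B + 1)) := by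
          apply mul_le_mul_of_nonneg_right this (by positivity)
      _ = 1 := by field_simp
  have hθ1 : θ < 1 := by nlinarith
  have habs : ∀ s, |c s| ≤ B ∧ |alphabar s * c s - K s| ≤ B ∧ |K s * c s| ≤ B := by
    intro s
    have h1 := hBD s
    have a1 : (0:ℝ) ≤ |c s| := abs_nonneg _
    have a2 : (0:ℝ) ≤ |alphabar s * c s - K s| := abs_nonneg _
    have a3 : (0:ℝ) ≤ |K s * c s| := abs_nonneg _
    simp only [hD] at h1
    exact ⟨by linarith, by linarith, by linarith⟩
  refine ⟨θ, ⟨hθpos, hθ1⟩, fun s => 1 + θ * c s, ?_, ?_⟩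
  · intro s
    obtain ⟨h1, -, -⟩ := habs s
    have h2 : θ * |c s| ≤ θ * B := mul_le_mul_of_nonneg_left h1 hθpos.le
    have h3 : -|c s| ≤ c s := neg_abs_le (c s)
    have h4 : -(θ * |c s|) ≤ θ * c s := by nlinarith [abs_nonneg (c s)]
    simp only
    nlinarith
  · intro s
    simp only
    have hsum : ∑ r, Q s r * (1 + θ * c r) = θ * (alphabar s - δ) := by
      have h1 : ∑ r, Q s r * (1 + θ * c r)
          = (∑ r, Q s r) + θ * ∑ r, Q s r * c r := by
        rw [Finset.mul_sum, ← Finset.sum_add_distrib]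
        exact Finset.sum_congr rfl fun r _ => by ring
      rw [h1, hQ_row s, hc s]; ring
    rw [hsum]
    have key : (θ * alphabar s - θ ^ 2 * K s) * (1 + θ * c s) - θ * (alphabar s - δ)
        = θ * δ + θ ^ 2 * (alphabar s * c s - K s) - θ ^ 3 * (K s * c s) := by ring
    rw [key]
    obtain ⟨-, ha, hb⟩ := habs s
    have ha' : -B ≤ alphabar s * c s - K s := by
      have := neg_abs_le (alphabar s * c s - K s); linarith
    have hb' : K s * c s ≤ B := le_trans (le_abs_self _) hb
    have hθle1 : θ ≤ 1 := hθ1.le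
    nlinarith [mul_pos hθpos hθpos, sq_nonneg θ,
      mul_le_mul_of_nonneg_left ha' (sq_nonneg θ),
      mul_le_mul_of_nonneg_left hb' (mul_nonneg (sq_nonneg θ) hθpos.le)]
end

section
/- Let x ∈ (0,1)^N and set V = Σ_{i=1}^N x_i. Then (1/V)·Σ_{i=1}^N (β b_i(x)(1 − x_i) − δ x_i) ≥ β d_min − β λ1 |x| − δ. -/
/-!
The numerator is `β ∑ᵢ bᵢ(x) - β xᵀAx - δV`. Summing `b(x)` by columns gives
`∑ᵢ bᵢ(x) ≥ d_min V`, since the column sums of the symmetric `A` are the degrees. The Rayleigh bound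
`xᵀAx ≤ λ₁ |x|²` comes from `A ≤ λ₁ • 1` in the Loewner order, and `λ₁ |x|² ≤ λ₁ |x| V` because
`|x| ≤ ∑ᵢ xᵢ = V` for `x ≥ 0` and `λ₁ ≥ A_ii = 0`.
-/

open Matrix
open scoped MatrixOrder

theorem Matrix.IsSymm.dotProduct_mulVec_le_of_eigenvalue_le_s9 {n : Type*} [Fintype n]
    [DecidableEq n] {A : Matrix n n ℝ} (hA : A.IsSymm) {c : ℝ}
    (hc : ∀ (μ : ℝ) (v : n → ℝ), v ≠ 0 → A *ᵥ v = μ • v → μ ≤ c) (v : n → ℝ) :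
    v ⬝ᵥ A *ᵥ v ≤ c * (v ⬝ᵥ v) := by
  have hA' : IsSelfAdjoint A := by
    rwa [IsSelfAdjoint, star_eq_conjTranspose, conjTranspose_eq_transpose_of_trivial]
  have hle : A ≤ algebraMap ℝ _ c := le_algebraMap_of_spectrum_le (fun μ hμ => by
    rw [← spectrum_toLin', ← Module.End.hasEigenvalue_iff_mem_spectrum] at hμ
    obtain ⟨hv, hne⟩ := hμ.exists_hasEigenvector.choose_spec
    exact hc μ _ hne (Module.End.mem_eigenspace_iff.mp hv)) hA'
  simpa [sub_mulVec, Algebra.algebraMap_eq_smul_one, smul_mulVec] using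
    (Matrix.le_iff.mp hle).dotProduct_mulVec_nonneg v

theorem Matrix.IsSymm.apply_self_le_of_eigenvalue_le {n : Type*} [Fintype n] [DecidableEq n]
    {A : Matrix n n ℝ} (hA : A.IsSymm) {c : ℝ}
    (hc : ∀ (μ : ℝ) (v : n → ℝ), v ≠ 0 → A *ᵥ v = μ • v → μ ≤ c) (i : n) : A i i ≤ c := by
  simpa using hA.dotProduct_mulVec_le_of_eigenvalue_le_s9 hc (Pi.single i 1)

theorem Matrix.mul_sum_le_sum_mulVec {m n : Type*} [Fintype m] [Fintype n]
    (A : Matrix m n ℝ) {d : ℝ} (hd : ∀ j, d ≤ ∑ i, A i j) {x : n → ℝ} (hx : 0 ≤ x) :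
    d * ∑ j, x j ≤ ∑ i, (A *ᵥ x) i := by
  simp only [mulVec, dotProduct]
  rw [Finset.sum_comm, Finset.mul_sum]
  exact Finset.sum_le_sum fun j _ => by
    rw [← Finset.sum_mul]; exact mul_le_mul_of_nonneg_right (hd j) (hx j)

theorem Real.sqrt_sum_sq_le_sum {ι : Type*} (s : Finset ι) {x : ι → ℝ} (hx : ∀ i ∈ s, 0 ≤ x i) :
    √(∑ i ∈ s, x i ^ 2) ≤ ∑ i ∈ s, x i :=
  Real.sqrt_le_iff.mpr ⟨Finset.sum_nonneg hx, Finset.sum_sq_le_sq_sum_of_nonneg hx⟩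

theorem drift_lower_bound_general
    (N : ℕ) (hN : 1 ≤ N)
    (A : Matrix (Fin N) (Fin N) ℝ)
    (hA_symm : A.IsSymm)
    (hA_diag : ∀ i, A i i = 0)
    (lam1 : ℝ)
    (hlam1_max : ∀ (μ : ℝ) (v : Fin N → ℝ), v ≠ 0 → A.mulVec v = μ • v → μ ≤ lam1)
    (dmin : ℝ)
    (hdmin_le : ∀ i, dmin ≤ ∑ j, A i j)
    (β δ : ℝ) (hβ : 0 ≤ β)
    (x : Fin N → ℝ) (hx : ∀ i, x i ∈ Set.Ioo (0 : ℝ) 1)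
    (V : ℝ) (hV : V = ∑ i, x i) :
    (1 / V) * ∑ i, (β * (∑ j, A i j * x j) * (1 - x i) - δ * x i)
      ≥ β * dmin - β * lam1 * Real.sqrt (∑ i, (x i) ^ 2) - δ := by
  have hx0 : 0 ≤ x := fun i => (hx i).1.le
  set s := √(∑ i, x i ^ 2) with hs
  have hV0 : 0 < V := hV ▸ Finset.sum_pos (fun i _ => (hx i).1) ⟨⟨0, hN⟩, Finset.mem_univ _⟩
  have hlam1 : 0 ≤ lam1 := hA_diag ⟨0, hN⟩ ▸ hA_symm.apply_self_le_of_eigenvalue_le hlam1_max _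
  have hsV : s ≤ V := hV ▸ Real.sqrt_sum_sq_le_sum _ fun i _ => hx0 i
  have hsum : dmin * V ≤ ∑ i, (A *ᵥ x) i := hV ▸ A.mul_sum_le_sum_mulVec
    (fun j => (hdmin_le j).trans_eq (Finset.sum_congr rfl fun i _ => hA_symm.apply i j)) hx0
  have hquad : x ⬝ᵥ A *ᵥ x ≤ lam1 * s * V := calc
    _ ≤ lam1 * (x ⬝ᵥ x) := hA_symm.dotProduct_mulVec_le_of_eigenvalue_le_s9 hlam1_max x
    _ = lam1 * s * s := by
      rw [mul_assoc, hs, Real.mul_self_sqrt (by positivity)]; simp only [dotProduct, sq]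
    _ ≤ lam1 * s * V := by gcongr
  have hexpand : ∑ i, (β * (∑ j, A i j * x j) * (1 - x i) - δ * x i)
      = β * ∑ i, (A *ᵥ x) i - β * (x ⬝ᵥ A *ᵥ x) - δ * V := by
    have hterm : ∀ i, β * (∑ j, A i j * x j) * (1 - x i) - δ * x i
        = β * (A *ᵥ x) i - β * (x i * (A *ᵥ x) i) - δ * x i := fun i => by
      rw [mulVec, dotProduct]; ring
    simp only [hterm, Finset.sum_sub_distrib, ← Finset.mul_sum, hV, dotProduct]
  rw [ge_iff_le, one_div_mul_eq_div, le_div_iff₀ hV0, hexpand]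
  nlinarith [mul_le_mul_of_nonneg_left hsum hβ, mul_le_mul_of_nonneg_left hquad hβ]

/-- Drift lower bound used in Theorem 4.2 (asymptotic bound of the time average): for
`x ∈ (0,1)^N` and `V = ∑ᵢ xᵢ`,
`(1/V) ∑ i (β b_i(x)(1-x_i) - δ x_i) ≥ β d_min - β λ₁ |x| - δ`. -/
theorem drift_lower_bound
    (N : ℕ) (hN : 1 ≤ N)
    (A : Matrix (Fin N) (Fin N) ℝ)
    (hA_symm : A.IsSymm)
    (hA_01 : ∀ i j, A i j = 0 ∨ A i j = 1)
    (hA_diag : ∀ i, A i i = 0)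
    (lam1 : ℝ)
    (hlam1_eig : ∃ v : Fin N → ℝ, v ≠ 0 ∧ A.mulVec v = lam1 • v)
    (hlam1_max : ∀ (μ : ℝ) (v : Fin N → ℝ), v ≠ 0 → A.mulVec v = μ • v → μ ≤ lam1)
    (dmin : ℝ)
    (hdmin_le : ∀ i, dmin ≤ ∑ j, A i j)
    (hdmin_mem : ∃ i, dmin = ∑ j, A i j)
    (β δ : ℝ) (hβ : 0 ≤ β) (hδ : 0 ≤ δ)
    (x : Fin N → ℝ) (hx : ∀ i, x i ∈ Set.Ioo (0 : ℝ) 1)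
    (V : ℝ) (hV : V = ∑ i, x i) :
    (1 / V) * ∑ i, (β * (∑ j, A i j * x j) * (1 - x i) - δ * x i)
      ≥ β * dmin - β * lam1 * Real.sqrt (∑ i, (x i) ^ 2) - δ :=
  drift_lower_bound_general N hN A hA_symm hA_diag lam1 hlam1_max dmin hdmin_le β δ hβ x hx V hV
end

section
/- Let x ∈ (0,1)^N. Then Σ_{i=1}^N (β b_i(x)(1 − x_i) − δ x_i)/(1 − x_i) + (1/2)·Σ_{i=1}^N σ_i(x_i)² b_i(x)² ≤ β λ1 N − δ·Σ_{i=1}^N x_i/(1 − x_i) + (M²/2) λ1² N. -/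
/-!
Write `b = A x`. The drift part of `L V₂` is exactly `β ∑ bᵢ - δ ∑ xᵢ/(1-xᵢ)`, so it remains to
bound `∑ bᵢ` and `∑ bᵢ²`. Since `A ≥ 0` entrywise and `0 < x < 1`, we have `0 ≤ b ≤ A 1`; hence
`∑ bᵢ ≤ 1 ⬝ A 1 ≤ λ₁ ‖1‖² = λ₁ N` and `∑ bᵢ² ≤ ‖A 1‖² ≤ λ₁² N`, both read off the spectral
decomposition of `A`. The second bound needs `|μ| ≤ λ₁` for every eigenvalue `μ`, which is the
Perron–Frobenius fact `|μ| ‖v‖² = |v ⬝ A v| ≤ |v| ⬝ A |v| ≤ λ₁ ‖v‖²`.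
-/

open Matrix

lemma sq_le_sq_of_abs_le_mul_of_le_one {s M v : ℝ} (h : |s| ≤ M * v) (hv0 : 0 ≤ v) (hv1 : v ≤ 1) :
    s ^ 2 ≤ M ^ 2 := calc
  s ^ 2 = |s| ^ 2 := (sq_abs s).symm
  _ ≤ (M * v) ^ 2 := pow_le_pow_left₀ (abs_nonneg s) h 2
  _ = M ^ 2 * v ^ 2 := mul_pow M v 2
  _ ≤ M ^ 2 := mul_le_of_le_one_right (sq_nonneg M) (pow_le_one₀ hv0 hv1)

section NonnegMatrix

variable {m n : Type*} [Fintype n] {A : Matrix m n ℝ}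

lemma Matrix.mulVec_mono_of_nonneg (hA : ∀ i j, 0 ≤ A i j) {u v : n → ℝ} (huv : u ≤ v) :
    A *ᵥ u ≤ A *ᵥ v :=
  fun i => dotProduct_le_dotProduct_of_nonneg_left huv (hA i)

lemma Matrix.abs_mulVec_le_mulVec_abs (hA : ∀ i j, 0 ≤ A i j) (v : n → ℝ) :
    |A *ᵥ v| ≤ A *ᵥ |v| := fun i =>
  calc |∑ j, A i j * v j| ≤ ∑ j, |A i j * v j| := Finset.abs_sum_le_sum_abs _ _
    _ = ∑ j, A i j * |v j| := by simp only [abs_mul, abs_of_nonneg (hA i _)]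

end NonnegMatrix

namespace Matrix.IsHermitian

variable {n : Type*} [Fintype n] [DecidableEq n] {A : Matrix n n ℝ} (hA : A.IsHermitian)
include hA

lemma dotProduct_eq_sum_eigenvectorBasis (y z : n → ℝ) :
    y ⬝ᵥ z = ∑ k, (⇑(hA.eigenvectorBasis k) ⬝ᵥ y) * (⇑(hA.eigenvectorBasis k) ⬝ᵥ z) := by
  have h := hA.eigenvectorBasis.sum_inner_mul_inner (WithLp.toLp 2 y) (WithLp.toLp 2 z)
  simp only [EuclideanSpace.inner_eq_star_dotProduct, star_trivial] at h
  simp only [← h, dotProduct_comm z, dotProduct_comm y z]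

lemma eigenvectorBasis_dotProduct_mulVec (k : n) (z : n → ℝ) :
    ⇑(hA.eigenvectorBasis k) ⬝ᵥ (A *ᵥ z) = hA.eigenvalues k * (⇑(hA.eigenvectorBasis k) ⬝ᵥ z) := by
  rw [dotProduct_mulVec, ← mulVec_transpose, (isHermitian_iff_isSymm.mp hA).eq,
    mulVec_eigenvectorBasis, smul_dotProduct, smul_eq_mul]

lemma dotProduct_mulVec_eq_sum_eigenvalues (y : n → ℝ) :
    y ⬝ᵥ (A *ᵥ y) = ∑ k, hA.eigenvalues k * (⇑(hA.eigenvectorBasis k) ⬝ᵥ y) ^ 2 := by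
  simp only [hA.dotProduct_eq_sum_eigenvectorBasis y, eigenvectorBasis_dotProduct_mulVec]
  exact Finset.sum_congr rfl fun k _ => by ring

lemma mulVec_dotProduct_mulVec_eq_sum_eigenvalues (y : n → ℝ) :
    (A *ᵥ y) ⬝ᵥ (A *ᵥ y) = ∑ k, hA.eigenvalues k ^ 2 * (⇑(hA.eigenvectorBasis k) ⬝ᵥ y) ^ 2 := by
  simp only [hA.dotProduct_eq_sum_eigenvectorBasis (A *ᵥ y), eigenvectorBasis_dotProduct_mulVec]
  exact Finset.sum_congr rfl fun k _ => by ring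

lemma dotProduct_self_eq_sum_eigenvectorBasis (y : n → ℝ) :
    y ⬝ᵥ y = ∑ k, (⇑(hA.eigenvectorBasis k) ⬝ᵥ y) ^ 2 := by
  simp only [hA.dotProduct_eq_sum_eigenvectorBasis y, sq]

lemma eigenvectorBasis_ne_zero (k : n) : ⇑(hA.eigenvectorBasis k) ≠ 0 :=
  (WithLp.ofLp_eq_zero 2).ne.2 (hA.eigenvectorBasis.orthonormal.ne_zero k)

lemma dotProduct_mulVec_le_of_eigenvalue_le {c : ℝ}
    (hc : ∀ (μ : ℝ) (v : n → ℝ), v ≠ 0 → A *ᵥ v = μ • v → μ ≤ c) (y : n → ℝ) :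
    y ⬝ᵥ (A *ᵥ y) ≤ c * (y ⬝ᵥ y) := by
  rw [hA.dotProduct_mulVec_eq_sum_eigenvalues, hA.dotProduct_self_eq_sum_eigenvectorBasis,
    Finset.mul_sum]
  exact Finset.sum_le_sum fun k _ => mul_le_mul_of_nonneg_right
    (hc _ _ (hA.eigenvectorBasis_ne_zero k) (hA.mulVec_eigenvectorBasis k)) (sq_nonneg _)

lemma mulVec_dotProduct_mulVec_le_of_abs_eigenvalue_le {c : ℝ}
    (hc : ∀ (μ : ℝ) (v : n → ℝ), v ≠ 0 → A *ᵥ v = μ • v → |μ| ≤ c) (y : n → ℝ) :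
    (A *ᵥ y) ⬝ᵥ (A *ᵥ y) ≤ c ^ 2 * (y ⬝ᵥ y) := by
  rw [hA.mulVec_dotProduct_mulVec_eq_sum_eigenvalues, hA.dotProduct_self_eq_sum_eigenvectorBasis,
    Finset.mul_sum]
  refine Finset.sum_le_sum fun k _ => mul_le_mul_of_nonneg_right ?_ (sq_nonneg _)
  rw [← sq_abs]
  exact pow_le_pow_left₀ (abs_nonneg _)
    (hc _ _ (hA.eigenvectorBasis_ne_zero k) (hA.mulVec_eigenvectorBasis k)) 2

lemma abs_le_of_eigenvalue_le_of_nonneg (hA0 : ∀ i j, 0 ≤ A i j) {c : ℝ}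
    (hc : ∀ (μ : ℝ) (v : n → ℝ), v ≠ 0 → A *ᵥ v = μ • v → μ ≤ c)
    {μ : ℝ} {v : n → ℝ} (hv : v ≠ 0) (hμ : A *ᵥ v = μ • v) : |μ| ≤ c := by
  have hvv : 0 < v ⬝ᵥ v :=
    lt_of_le_of_ne' (Finset.sum_nonneg fun i _ => mul_self_nonneg (v i))
      (dotProduct_self_eq_zero.not.mpr hv)
  have habs : |v| ⬝ᵥ |v| = v ⬝ᵥ v := by simp only [dotProduct, Pi.abs_apply, abs_mul_abs_self]
  refine le_of_mul_le_mul_right ?_ hvv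
  calc |μ| * (v ⬝ᵥ v) = |v ⬝ᵥ (A *ᵥ v)| := by
        rw [hμ, dotProduct_smul, smul_eq_mul, abs_mul, abs_of_pos hvv]
    _ ≤ ∑ i, |v i| * |(A *ᵥ v) i| := by
        simpa only [dotProduct, abs_mul] using
          Finset.abs_sum_le_sum_abs (fun i => v i * (A *ᵥ v) i) Finset.univ
    _ ≤ |v| ⬝ᵥ (A *ᵥ |v|) := Finset.sum_le_sum fun i _ =>
        mul_le_mul_of_nonneg_left (abs_mulVec_le_mulVec_abs hA0 v i) (abs_nonneg _)
    _ ≤ c * (v ⬝ᵥ v) := habs ▸ hA.dotProduct_mulVec_le_of_eigenvalue_le hc |v|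

lemma sum_mulVec_le_of_eigenvalue_le (hA0 : ∀ i j, 0 ≤ A i j) {c : ℝ}
    (hc : ∀ (μ : ℝ) (v : n → ℝ), v ≠ 0 → A *ᵥ v = μ • v → μ ≤ c) {x : n → ℝ} (hx1 : x ≤ 1) :
    ∑ i, (A *ᵥ x) i ≤ c * Fintype.card n := calc
  ∑ i, (A *ᵥ x) i ≤ 1 ⬝ᵥ (A *ᵥ 1) := by
    rw [one_dotProduct]
    exact Finset.sum_le_sum fun i _ => mulVec_mono_of_nonneg hA0 hx1 i
  _ ≤ c * (1 ⬝ᵥ 1) := hA.dotProduct_mulVec_le_of_eigenvalue_le hc 1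
  _ = c * Fintype.card n := by rw [one_dotProduct_one]

lemma sum_sq_mulVec_le_of_eigenvalue_le (hA0 : ∀ i j, 0 ≤ A i j) {c : ℝ}
    (hc : ∀ (μ : ℝ) (v : n → ℝ), v ≠ 0 → A *ᵥ v = μ • v → μ ≤ c) {x : n → ℝ}
    (hx0 : 0 ≤ x) (hx1 : x ≤ 1) :
    ∑ i, (A *ᵥ x) i ^ 2 ≤ c ^ 2 * Fintype.card n := calc
  ∑ i, (A *ᵥ x) i ^ 2 ≤ (A *ᵥ 1) ⬝ᵥ (A *ᵥ 1) := by
    have hb0 : 0 ≤ A *ᵥ x := mulVec_zero A ▸ mulVec_mono_of_nonneg hA0 hx0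
    simp only [dotProduct, ← sq]
    exact Finset.sum_le_sum fun i _ =>
      pow_le_pow_left₀ (hb0 i) (mulVec_mono_of_nonneg hA0 hx1 i) 2
  _ ≤ c ^ 2 * (1 ⬝ᵥ 1) := hA.mulVec_dotProduct_mulVec_le_of_abs_eigenvalue_le
    (fun _ _ hv hμ => hA.abs_le_of_eigenvalue_le_of_nonneg hA0 hc hv hμ) 1
  _ = c ^ 2 * Fintype.card n := by rw [one_dotProduct_one]

end Matrix.IsHermitian

theorem LV2_estimate_general
    (N : ℕ)
    (A : Matrix (Fin N) (Fin N) ℝ)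
    (hA_symm : A.IsSymm)
    (hA_01 : ∀ i j, A i j = 0 ∨ A i j = 1)
    (lam1 : ℝ)
    (hlam1_max : ∀ (μ : ℝ) (v : Fin N → ℝ), v ≠ 0 → A.mulVec v = μ • v → μ ≤ lam1)
    (β δ : ℝ) (hβ : 0 ≤ β)
    (M : ℝ)
    (σ : Fin N → ℝ → ℝ)
    (hσ : ∀ i, ∀ v ∈ Set.Ioo (0 : ℝ) 1, |σ i v| ≤ M * v)
    (x : Fin N → ℝ) (hx : ∀ i, x i ∈ Set.Ioo (0 : ℝ) 1) :
    ∑ i, (β * (∑ j, A i j * x j) * (1 - x i) - δ * x i) / (1 - x i)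
        + (1 / 2) * ∑ i, (σ i (x i)) ^ 2 * (∑ j, A i j * x j) ^ 2
      ≤ β * lam1 * N - δ * ∑ i, x i / (1 - x i) + M ^ 2 / 2 * lam1 ^ 2 * N := by
  have hA : A.IsHermitian := isHermitian_iff_isSymm.mpr hA_symm
  have hA0 : ∀ i j, 0 ≤ A i j := fun i j => by rcases hA_01 i j with h | h <;> simp [h]
  have hx0 : 0 ≤ x := fun i => (hx i).1.le
  have hx1 : x ≤ 1 := fun i => (hx i).2.le
  have hdrift : ∑ i, (β * (A *ᵥ x) i * (1 - x i) - δ * x i) / (1 - x i)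
      = β * ∑ i, (A *ᵥ x) i - δ * ∑ i, x i / (1 - x i) := by
    rw [Finset.mul_sum, Finset.mul_sum, ← Finset.sum_sub_distrib]
    refine Finset.sum_congr rfl fun i _ => ?_
    field_simp [(sub_pos.mpr (hx i).2).ne']
  have hdiffusion : ∑ i, σ i (x i) ^ 2 * (A *ᵥ x) i ^ 2 ≤ M ^ 2 * ∑ i, (A *ᵥ x) i ^ 2 := by
    rw [Finset.mul_sum]
    exact Finset.sum_le_sum fun i _ => mul_le_mul_of_nonneg_right
      (sq_le_sq_of_abs_le_mul_of_le_one (hσ i (x i) (hx i)) (hx0 i) (hx1 i)) (sq_nonneg _)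
  have hsum := hA.sum_mulVec_le_of_eigenvalue_le hA0 hlam1_max hx1
  have hsum_sq := hA.sum_sq_mulVec_le_of_eigenvalue_le hA0 hlam1_max hx0 hx1
  rw [Fintype.card_fin] at hsum hsum_sq
  change ∑ i, (β * (A *ᵥ x) i * (1 - x i) - δ * x i) / (1 - x i)
      + 1 / 2 * ∑ i, σ i (x i) ^ 2 * (A *ᵥ x) i ^ 2 ≤ _
  rw [hdrift]
  linarith [mul_le_mul_of_nonneg_left hsum hβ, mul_le_mul_of_nonneg_left hsum_sq (sq_nonneg M)]

/-- Bound on `L V₂` for the Lyapunov function `V₂(x) = -∑ᵢ log(1-xᵢ)` used in the proof of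
positive recurrence and ergodicity (Theorem 4.6): for `x ∈ (0,1)^N`,
`∑ i (β b_i(x)(1-x_i) - δ x_i)/(1-x_i) + (1/2) ∑ i σ_i(x_i)² b_i(x)²
  ≤ β λ₁ N - δ ∑ i x_i/(1-x_i) + (M²/2) λ₁² N`. -/
theorem LV2_estimate
    (N : ℕ) (hN : 1 ≤ N)
    (A : Matrix (Fin N) (Fin N) ℝ)
    (hA_symm : A.IsSymm)
    (hA_01 : ∀ i j, A i j = 0 ∨ A i j = 1)
    (hA_diag : ∀ i, A i i = 0)
    (lam1 : ℝ)
    (hlam1_eig : ∃ v : Fin N → ℝ, v ≠ 0 ∧ A.mulVec v = lam1 • v)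
    (hlam1_max : ∀ (μ : ℝ) (v : Fin N → ℝ), v ≠ 0 → A.mulVec v = μ • v → μ ≤ lam1)
    (β δ : ℝ) (hβ : 0 ≤ β) (hδ : 0 ≤ δ)
    (M : ℝ) (hM : 0 ≤ M)
    (σ : Fin N → ℝ → ℝ)
    (hσ : ∀ i, ∀ v ∈ Set.Ioo (0 : ℝ) 1, |σ i v| ≤ M * v)
    (x : Fin N → ℝ) (hx : ∀ i, x i ∈ Set.Ioo (0 : ℝ) 1) :
    ∑ i, (β * (∑ j, A i j * x j) * (1 - x i) - δ * x i) / (1 - x i)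
        + (1 / 2) * ∑ i, (σ i (x i)) ^ 2 * (∑ j, A i j * x j) ^ 2
      ≤ β * lam1 * N - δ * ∑ i, x i / (1 - x i) + M ^ 2 / 2 * lam1 ^ 2 * N :=
  LV2_estimate_general N A hA_symm hA_01 lam1 hlam1_max β δ hβ M σ hσ x hx
end

section
/- Let u ∈ ℝ^N satisfy u_i > 0 for all i, Σ_{i=1}^N u_i = 1, and A u = λ1 u (u is the Perron eigenvector of A). Set ū = 1/(min_i u_i)². Then for every x ∈ (0,1)^N: Σ_{i=1}^N u_i x_i b_i(x) ≤ λ1 · ū · (Σ_{i=1}^N u_i x_i)². -/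
/-- First estimate in Remark 3.6: with `u` the Perron eigenvector of `A` (positive, summing
to 1, `A u = λ₁ u`) and `ū = 1/(minᵢ uᵢ)²`, for every `x ∈ (0,1)^N`,
`∑ i uᵢ xᵢ b_i(x) ≤ λ₁ ū (∑ i uᵢ xᵢ)²`. -/
theorem perron_drift_estimate
    (N : ℕ) (hN : 1 ≤ N)
    (A : Matrix (Fin N) (Fin N) ℝ)
    (hA_symm : A.IsSymm)
    (hA_01 : ∀ i j, A i j = 0 ∨ A i j = 1)
    (hA_diag : ∀ i, A i i = 0)
    (lam1 : ℝ)
    (hlam1_max : ∀ (μ : ℝ) (v : Fin N → ℝ), v ≠ 0 → A.mulVec v = μ • v → μ ≤ lam1)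
    (u : Fin N → ℝ)
    (hu_pos : ∀ i, 0 < u i)
    (hu_sum : ∑ i, u i = 1)
    (hu_eig : A.mulVec u = lam1 • u)
    (umin : ℝ)
    (humin_le : ∀ i, umin ≤ u i)
    (humin_mem : ∃ i, umin = u i)
    (ubar : ℝ) (hubar : ubar = 1 / umin ^ 2)
    (x : Fin N → ℝ) (hx : ∀ i, x i ∈ Set.Ioo (0 : ℝ) 1) :
    ∑ i, u i * x i * (∑ j, A i j * x j) ≤ lam1 * ubar * (∑ i, u i * x i) ^ 2 := by
  obtain ⟨im, him⟩ := humin_mem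
  have humin_pos : 0 < umin := him ▸ hu_pos im
  have hAnn : ∀ i j, 0 ≤ A i j := fun i j => by rcases hA_01 i j with h | h <;> simp [h]
  have hx0 : ∀ i, 0 ≤ x i := fun i => (hx i).1.le
  have hu1 : ∀ i, u i ≤ 1 := by
    intro i
    rw [← hu_sum]
    exact Finset.single_le_sum (fun j _ => (hu_pos j).le) (Finset.mem_univ i)
  set S := ∑ i, u i * x i with hS
  have hS_nn : 0 ≤ S := Finset.sum_nonneg fun i _ => mul_nonneg (hu_pos i).le (hx0 i)
  have heig : ∀ i, ∑ j, A i j * u j = lam1 * u i := by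
    intro i
    have h := congrFun hu_eig i
    simpa [Matrix.mulVec, dotProduct] using h
  have hlam_nn : 0 ≤ lam1 := by
    have i0 : Fin N := ⟨0, hN⟩
    have h1 : 0 ≤ ∑ j, A i0 j * u j :=
      Finset.sum_nonneg fun j _ => mul_nonneg (hAnn _ _) (hu_pos j).le
    rw [heig i0] at h1
    nlinarith [hu_pos i0]
  have hxS : ∀ j, umin * x j ≤ S := by
    intro j
    have h1 : umin * x j ≤ u j * x j := mul_le_mul_of_nonneg_right (humin_le j) (hx0 j)
    have h2 : u j * x j ≤ S :=
      Finset.single_le_sum (fun k _ => mul_nonneg (hu_pos k).le (hx0 k)) (Finset.mem_univ j)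
    linarith
  have hdeg : ∀ i, umin * ∑ j, A i j ≤ lam1 * u i := by
    intro i
    rw [← heig i, Finset.mul_sum]
    refine Finset.sum_le_sum fun j _ => ?_
    have := mul_le_mul_of_nonneg_left (humin_le j) (hAnn i j)
    nlinarith
  have hdeg_nn : ∀ i, 0 ≤ ∑ j, A i j := fun i =>
    Finset.sum_nonneg fun j _ => hAnn i j
  have hb : ∀ i, umin ^ 2 * ∑ j, A i j * x j ≤ lam1 * u i * S := by
    intro i
    have h1 : umin * ∑ j, A i j * x j ≤ (∑ j, A i j) * S := by
      rw [Finset.mul_sum, Finset.sum_mul]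
      refine Finset.sum_le_sum fun j _ => ?_
      have := mul_le_mul_of_nonneg_left (hxS j) (hAnn i j)
      nlinarith
    have h2 := hdeg i
    nlinarith [mul_le_mul_of_nonneg_left h1 humin_pos.le,
      mul_le_mul_of_nonneg_right h2 hS_nn]
  have hmain : umin ^ 2 * ∑ i, u i * x i * (∑ j, A i j * x j) ≤ lam1 * S ^ 2 := by
    calc umin ^ 2 * ∑ i, u i * x i * (∑ j, A i j * x j)
        = ∑ i, (u i * x i) * (umin ^ 2 * ∑ j, A i j * x j) := by
          rw [Finset.mul_sum]; exact Finset.sum_congr rfl fun i _ => by ring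
      _ ≤ ∑ i, (u i * x i) * (lam1 * u i * S) :=
          Finset.sum_le_sum fun i _ =>
            mul_le_mul_of_nonneg_left (hb i) (mul_nonneg (hu_pos i).le (hx0 i))
      _ ≤ ∑ i, (u i * x i) * (lam1 * S) := by
          refine Finset.sum_le_sum fun i _ => ?_
          have h3 : lam1 * u i * S ≤ lam1 * S := by
            nlinarith [mul_nonneg (mul_nonneg hlam_nn hS_nn) (sub_nonneg.mpr (hu1 i))]
          exact mul_le_mul_of_nonneg_left h3 (mul_nonneg (hu_pos i).le (hx0 i))
      _ = S * (lam1 * S) := by rw [← Finset.sum_mul]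
      _ = lam1 * S ^ 2 := by ring
  have hfin : ∑ i, u i * x i * (∑ j, A i j * x j) ≤ lam1 * S ^ 2 / umin ^ 2 := by
    rw [le_div_iff₀ (by positivity)]
    linarith
  calc ∑ i, u i * x i * (∑ j, A i j * x j)
      ≤ lam1 * S ^ 2 / umin ^ 2 := hfin
    _ = lam1 * ubar * S ^ 2 := by rw [hubar]; field_simp
end
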